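/- arXiv:1006.3223 — 5 statements merged into one kernel-verified Lean document; each statement's English description precedes it below -/
import Mathlib

section
/- Let P be a double CI-poset that has a pseudo-involution and satisfies the self-adjointness law. Then for all a, b in P: a→b = (a∘b~)⁻ and a⇝b = (a∗b⁻)~. -/
/-- A double CI-poset: a bounded poset with conjunctions `circ` (∘), `cstar` (∗) and
implications `arr` (→), `squig` (⇝) satisfying the unity and residuation laws. -/
class DoubleCIPoset (P : Type*) extends PartialOrder P, BoundedOrder P where
  circ : P → P → P
  cstar : P → P → P
  arr : P → P → P
  squig : P → P → P
  one_circ : ∀ a : P, circ ⊤ a = a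
  circ_one : ∀ a : P, circ a ⊤ = a
  one_cstar : ∀ a : P, cstar ⊤ a = a
  cstar_one : ∀ a : P, cstar a ⊤ = a
  resid_circ : ∀ a b c : P, circ a b ≤ c ↔ b ≤ squig a c
  resid_cstar : ∀ a b c : P, cstar a b ≤ c ↔ b ≤ arr a c

namespace DoubleCIPoset

variable {P : Type*} [DoubleCIPoset P]

/-- a⁻ := a → 0 -/
def lneg (a : P) : P := arr a ⊥

/-- a~ := a ⇝ 0 -/
def rneg (a : P) : P := squig a ⊥

end DoubleCIPoset

open DoubleCIPoset

/-- In a double CI-poset with a pseudo-involution satisfying the self-adjointness law,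
a→b = (a∘b~)⁻ and a⇝b = (a∗b⁻)~. -/
theorem imp_eq_neg_conj {P : Type*} [DoubleCIPoset P]
    (hinv : ∀ a : P, rneg (lneg a) = a ∧ lneg (rneg a) = a)
    (hanti : ∀ a b : P, a ≤ b → lneg b ≤ lneg a ∧ rneg b ≤ rneg a)
    (hsa : ∀ a b c : P, (circ a b ≤ c ↔ cstar a (lneg c) ≤ lneg b) ∧
      (cstar a b ≤ c ↔ circ a (rneg c) ≤ rneg b)) :
    ∀ a b : P, arr a b = lneg (circ a (rneg b)) ∧ squig a b = rneg (cstar a (lneg b)) := by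
  intro a b
  have key1 : ∀ x : P, x ≤ arr a b ↔ x ≤ lneg (circ a (rneg b)) := by
    intro x
    rw [← resid_cstar, (hsa a x b).2]
    constructor
    · intro h
      have := (hanti _ _ h).1
      rw [(hinv x).2] at this
      exact this
    · intro h
      have := (hanti _ _ h).2
      rw [show rneg (lneg (circ a (rneg b))) = circ a (rneg b) from (hinv _).1] at this
      exact this
  have key2 : ∀ x : P, x ≤ squig a b ↔ x ≤ rneg (cstar a (lneg b)) := by
    intro x
    rw [← resid_circ, (hsa a x b).1]
    constructor
    · intro h
      have := (hanti _ _ h).2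
      rw [(hinv x).1] at this
      exact this
    · intro h
      have := (hanti _ _ h).1
      rw [show lneg (rneg (cstar a (lneg b))) = cstar a (lneg b) from (hinv _).2] at this
      exact this
  exact ⟨le_antisymm ((key1 _).1 le_rfl) ((key1 _).2 le_rfl),
         le_antisymm ((key2 _).1 le_rfl) ((key2 _).2 le_rfl)⟩
end

section
/- Let P be a double CI-poset that has a pseudo-involution and satisfies the self-adjointness law. Then P satisfies the divisibility law (for all a, b, c: (c ≤ a and c ≤ b) ⟺ c ≤ a∘(a⇝b) = a∗(a→b)) if and only if P satisfies the ortho-exchange law: (a⁻∘b⁻ = 0 and c~ ≤ a∘b imply b⁻ ≤ a∗c) and (a~∗b~ = 0 and c⁻ ≤ a∗b imply b~ ≤ a∘c), for all a, b, c. -/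
open DoubleCIPoset

section Aux

variable {P : Type*} [DoubleCIPoset P]

lemma aux_circ_squig_le (a b : P) : circ a (squig a b) ≤ b :=
  (resid_circ a (squig a b) b).2 le_rfl

lemma aux_cstar_arr_le (a b : P) : cstar a (arr a b) ≤ b :=
  (resid_cstar a (arr a b) b).2 le_rfl

lemma aux_circ_mono (a : P) {b c : P} (h : b ≤ c) : circ a b ≤ circ a c :=
  (resid_circ a b (circ a c)).2 (h.trans ((resid_circ a c (circ a c)).1 le_rfl))

lemma aux_cstar_mono (a : P) {b c : P} (h : b ≤ c) : cstar a b ≤ cstar a c :=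
  (resid_cstar a b (cstar a c)).2 (h.trans ((resid_cstar a c (cstar a c)).1 le_rfl))

lemma aux_squig_mono (a : P) {b c : P} (h : b ≤ c) : squig a b ≤ squig a c :=
  (resid_circ a (squig a b) c).1 ((aux_circ_squig_le a b).trans h)

lemma aux_arr_mono (a : P) {b c : P} (h : b ≤ c) : arr a b ≤ arr a c :=
  (resid_cstar a (arr a b) c).1 ((aux_cstar_arr_le a b).trans h)

lemma aux_circ_le_left (a b : P) : circ a b ≤ a :=
  (aux_circ_mono a le_top).trans (DoubleCIPoset.circ_one a).le

lemma aux_cstar_le_left (a b : P) : cstar a b ≤ a :=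
  (aux_cstar_mono a le_top).trans (DoubleCIPoset.cstar_one a).le

lemma aux_rneg_top : rneg (⊤ : P) = ⊥ := by
  have h : circ (⊤:P) (squig ⊤ ⊥) ≤ ⊥ := (resid_circ ⊤ (squig ⊤ ⊥) ⊥).2 le_rfl
  rw [DoubleCIPoset.one_circ] at h
  exact le_bot_iff.1 h

lemma aux_lneg_top : lneg (⊤ : P) = ⊥ := by
  have h : cstar (⊤:P) (arr ⊤ ⊥) ≤ ⊥ := (resid_cstar ⊤ (arr ⊤ ⊥) ⊥).2 le_rfl
  rw [DoubleCIPoset.one_cstar] at h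
  exact le_bot_iff.1 h

lemma aux_lneg_bot (hinv : ∀ a : P, rneg (lneg a) = a ∧ lneg (rneg a) = a) :
    lneg (⊥ : P) = ⊤ := by
  have h := (hinv (⊤:P)).2
  rwa [aux_rneg_top] at h

lemma aux_rneg_bot (hinv : ∀ a : P, rneg (lneg a) = a ∧ lneg (rneg a) = a) :
    rneg (⊥ : P) = ⊤ := by
  have h := (hinv (⊤:P)).1
  rwa [aux_lneg_top] at h

/-- Galois connection: b ≤ a~ ↔ a ≤ b⁻ -/
lemma aux_galois (hinv : ∀ a : P, rneg (lneg a) = a ∧ lneg (rneg a) = a)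
    (hsa : ∀ a b c : P, (circ a b ≤ c ↔ cstar a (lneg c) ≤ lneg b) ∧
      (cstar a b ≤ c ↔ circ a (rneg c) ≤ rneg b))
    {a b : P} : b ≤ rneg a ↔ a ≤ lneg b := by
  constructor
  · intro h
    have h2 : circ a b ≤ ⊥ := (resid_circ a b ⊥).2 h
    have h3 := (hsa a b ⊥).1.1 h2
    rwa [aux_lneg_bot hinv, DoubleCIPoset.cstar_one] at h3
  · intro h
    have h2 : cstar a (lneg (⊥:P)) ≤ lneg b := by
      rwa [aux_lneg_bot hinv, DoubleCIPoset.cstar_one]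
    exact (resid_circ a b ⊥).1 ((hsa a b ⊥).1.2 h2)

/-- (a∘b)⁻ = a→b⁻ -/
lemma aux_lneg_circ (hinv : ∀ a : P, rneg (lneg a) = a ∧ lneg (rneg a) = a)
    (hsa : ∀ a b c : P, (circ a b ≤ c ↔ cstar a (lneg c) ≤ lneg b) ∧
      (cstar a b ≤ c ↔ circ a (rneg c) ≤ rneg b))
    (a b : P) : lneg (circ a b) = arr a (lneg b) := by
  have key : ∀ z : P, z ≤ lneg (circ a b) ↔ z ≤ arr a (lneg b) := by
    intro z
    rw [← aux_galois hinv hsa, ← resid_cstar a z (lneg b)]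
    have h := (hsa a b (rneg z)).1
    rw [(hinv z).2] at h
    exact h
  exact le_antisymm ((key _).1 le_rfl) ((key _).2 le_rfl)

/-- (a∗b)~ = a⇝b~ -/
lemma aux_rneg_cstar (hinv : ∀ a : P, rneg (lneg a) = a ∧ lneg (rneg a) = a)
    (hsa : ∀ a b c : P, (circ a b ≤ c ↔ cstar a (lneg c) ≤ lneg b) ∧
      (cstar a b ≤ c ↔ circ a (rneg c) ≤ rneg b))
    (a b : P) : rneg (cstar a b) = squig a (rneg b) := by
  have key : ∀ z : P, z ≤ rneg (cstar a b) ↔ z ≤ squig a (rneg b) := by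
    intro z
    rw [aux_galois hinv hsa (a := cstar a b) (b := z), ← resid_circ a z (rneg b)]
    have h := (hsa a b (lneg z)).2
    rw [(hinv z).1] at h
    exact h
  exact le_antisymm ((key _).1 le_rfl) ((key _).2 le_rfl)

end Aux

/-- In a double CI-poset with a pseudo-involution satisfying the self-adjointness law,
the divisibility law holds iff the ortho-exchange law holds. -/
theorem divisibility_iff_ortho_exchange {P : Type*} [DoubleCIPoset P]
    (hinv : ∀ a : P, rneg (lneg a) = a ∧ lneg (rneg a) = a)
    (hanti : ∀ a b : P, a ≤ b → lneg b ≤ lneg a ∧ rneg b ≤ rneg a)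
    (hsa : ∀ a b c : P, (circ a b ≤ c ↔ cstar a (lneg c) ≤ lneg b) ∧
      (cstar a b ≤ c ↔ circ a (rneg c) ≤ rneg b)) :
    (∀ a b c : P, (c ≤ a ∧ c ≤ b) ↔
      (circ a (squig a b) = cstar a (arr a b) ∧ c ≤ circ a (squig a b))) ↔
    (∀ a b c : P,
      (circ (lneg a) (lneg b) = ⊥ → rneg c ≤ circ a b → lneg b ≤ cstar a c) ∧
      (cstar (rneg a) (rneg b) = ⊥ → lneg c ≤ cstar a b → rneg b ≤ circ a c)) := by
  constructor
  · intro hD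
    have hDiv1 : ∀ a u : P, u ≤ a → u ≤ cstar a (arr a u) := by
      intro a u h
      have h2 := (hD a u u).1 ⟨h, le_rfl⟩
      rw [← h2.1]
      exact h2.2
    have hDiv2 : ∀ a u : P, u ≤ a → u ≤ circ a (squig a u) := fun a u h =>
      ((hD a u u).1 ⟨h, le_rfl⟩).2
    intro a b c
    constructor
    · intro h1 h2
      have hb : lneg b ≤ a := by
        have h3 := (resid_circ (lneg a) (lneg b) ⊥).1 h1.le
        rwa [show squig (lneg a) ⊥ = rneg (lneg a) from rfl, (hinv a).1] at h3
      have h3 : arr a (lneg b) ≤ c := by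
        have h4 := (hanti _ _ h2).1
        rwa [(hinv c).2, aux_lneg_circ hinv hsa] at h4
      exact (hDiv1 a (lneg b) hb).trans (aux_cstar_mono a h3)
    · intro h1 h2
      have hb : rneg b ≤ a := by
        have h3 := (resid_cstar (rneg a) (rneg b) ⊥).1 h1.le
        rwa [show arr (rneg a) ⊥ = lneg (rneg a) from rfl, (hinv a).2] at h3
      have h3 : squig a (rneg b) ≤ c := by
        have h4 := (hanti _ _ h2).2
        rwa [(hinv c).1, aux_rneg_cstar hinv hsa] at h4
      exact (hDiv2 a (rneg b) hb).trans (aux_circ_mono a h3)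
  · intro hOE
    have hDiv1 : ∀ a u : P, u ≤ a → u ≤ cstar a (arr a u) := by
      intro a u h
      have h1 : circ (lneg a) (lneg (rneg u)) = ⊥ := by
        rw [(hinv u).2]
        refine le_bot_iff.1 ((resid_circ (lneg a) u ⊥).2 ?_)
        rw [show squig (lneg a) ⊥ = rneg (lneg a) from rfl, (hinv a).1]
        exact h
      have h2 : rneg (arr a u) ≤ circ a (rneg u) := by
        have h3 : lneg (circ a (rneg u)) = arr a u := by
          rw [aux_lneg_circ hinv hsa, (hinv u).2]
        exact le_of_eq (by rw [← h3]; exact (hinv _).1)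
      have h4 := (hOE a (rneg u) (arr a u)).1 h1 h2
      rwa [(hinv u).2] at h4
    have hDiv2 : ∀ a u : P, u ≤ a → u ≤ circ a (squig a u) := by
      intro a u h
      have h1 : cstar (rneg a) (rneg (lneg u)) = ⊥ := by
        rw [(hinv u).1]
        refine le_bot_iff.1 ((resid_cstar (rneg a) u ⊥).2 ?_)
        rw [show arr (rneg a) ⊥ = lneg (rneg a) from rfl, (hinv a).2]
        exact h
      have h2 : lneg (squig a u) ≤ cstar a (lneg u) := by
        have h3 : rneg (cstar a (lneg u)) = squig a u := by
          rw [aux_rneg_cstar hinv hsa, (hinv u).1]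
        exact le_of_eq (by rw [← h3]; exact (hinv _).2)
      have h4 := (hOE a (lneg u) (squig a u)).2 h1 h2
      rwa [(hinv u).1] at h4
    intro a b c
    constructor
    · rintro ⟨hca, hcb⟩
      have hmeet1 : ∀ d : P, d ≤ a → d ≤ b → d ≤ circ a (squig a b) := fun d h1 h2 =>
        (hDiv2 a d h1).trans (aux_circ_mono a (aux_squig_mono a h2))
      have hmeet2 : ∀ d : P, d ≤ a → d ≤ b → d ≤ cstar a (arr a b) := fun d h1 h2 =>
        (hDiv1 a d h1).trans (aux_cstar_mono a (aux_arr_mono a h2))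
      exact ⟨le_antisymm (hmeet2 _ (aux_circ_le_left a _) (aux_circ_squig_le a b))
        (hmeet1 _ (aux_cstar_le_left a _) (aux_cstar_arr_le a b)), hmeet1 c hca hcb⟩
    · rintro ⟨_, hc⟩
      exact ⟨hc.trans (aux_circ_le_left a _), hc.trans (aux_circ_squig_le a b)⟩
end

section
/- Every pseudo Sasaki algebra P, with implications defined by a→b := (a∘b~)⁻ and a⇝b := (a∗b⁻)~, is a double CI-lattice: the operations ∘, ∗, →, ⇝ satisfy the unity law and the residuation laws (a∘b ≤ c ⟺ b ≤ a⇝c and a∗b ≤ c ⟺ b ≤ a→c), and P is a lattice with a∧b = a∘(a⇝b) = a∗(a→b) and a∨b = (a⁻∧b⁻)~ = (a~∧b~)⁻. -/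
/-- A pseudo Sasaki algebra: a bounded poset with two negations `lneg` (⁻), `rneg` (~)
and two conjunctions `circ` (∘), `cstar` (∗) satisfying pseudo-involution, unity,
self-adjointness, divisibility, partial associativity and the compatibility of the two
descriptions of the partial sum. -/
class PseudoSasaki (P : Type*) extends PartialOrder P, BoundedOrder P where
  lneg : P → P
  rneg : P → P
  circ : P → P → P
  cstar : P → P → P
  rneg_lneg : ∀ a : P, rneg (lneg a) = a
  lneg_rneg : ∀ a : P, lneg (rneg a) = a
  lneg_anti : ∀ a b : P, a ≤ b → lneg b ≤ lneg a
  rneg_anti : ∀ a b : P, a ≤ b → rneg b ≤ rneg a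
  circ_one : ∀ a : P, circ a ⊤ = a
  one_circ : ∀ a : P, circ ⊤ a = a
  one_cstar : ∀ a : P, cstar ⊤ a = a
  cstar_one : ∀ a : P, cstar a ⊤ = a
  sa_circ : ∀ a b c : P, circ a b ≤ c ↔ cstar a (lneg c) ≤ lneg b
  sa_cstar : ∀ a b c : P, cstar a b ≤ c ↔ circ a (rneg c) ≤ rneg b
  divisibility : ∀ a b c : P, c ≤ a → c ≤ b →
    c ≤ circ a (rneg (cstar a (lneg b))) ∧
      circ a (rneg (cstar a (lneg b))) = cstar a (lneg (circ a (rneg b)))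
  passoc_circ : ∀ a b c : P, a ≤ lneg b → c ≤ circ (rneg a) (rneg b) →
    circ (circ (rneg a) (rneg b)) (rneg c) = circ (rneg a) (circ (rneg b) (rneg c))
  passoc_cstar : ∀ a b c : P, b ≤ rneg a → c ≤ cstar (lneg b) (lneg a) →
    cstar (lneg c) (cstar (lneg b) (lneg a)) = cstar (cstar (lneg c) (lneg b)) (lneg a)
  sum_compat : ∀ a b : P, a ≤ lneg b →
    lneg (circ (rneg a) (rneg b)) = rneg (cstar (lneg b) (lneg a))

open PseudoSasaki

/-- The implications a→b := (a∘b~)⁻ and a⇝b := (a∗b⁻)~ of a pseudo Sasaki algebra. -/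
def PseudoSasaki.sarr {P : Type*} [PseudoSasaki P] (a b : P) : P := lneg (circ a (rneg b))

def PseudoSasaki.ssquig {P : Type*} [PseudoSasaki P] (a b : P) : P := rneg (cstar a (lneg b))

/-- The meet a∧b = a∘(a⇝b) of a pseudo Sasaki algebra. -/
def PseudoSasaki.smeet {P : Type*} [PseudoSasaki P] (a b : P) : P := circ a (ssquig a b)


section Aux
variable {P : Type*} [PseudoSasaki P]

lemma ps_le_lneg_iff (x b : P) : x ≤ lneg b ↔ b ≤ rneg x := by
  constructor
  · intro h; have := rneg_anti _ _ h; rwa [rneg_lneg] at this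
  · intro h; have := lneg_anti _ _ h; rwa [lneg_rneg] at this

lemma ps_le_rneg_iff (x b : P) : x ≤ rneg b ↔ b ≤ lneg x := by
  constructor
  · intro h; have := lneg_anti _ _ h; rwa [lneg_rneg] at this
  · intro h; have := rneg_anti _ _ h; rwa [rneg_lneg] at this

lemma ps_rneg_le_iff (b x : P) : rneg b ≤ x ↔ lneg x ≤ b := by
  constructor
  · intro h; have := lneg_anti _ _ h; rwa [lneg_rneg] at this
  · intro h; have := rneg_anti _ _ h; rwa [rneg_lneg] at this

lemma ps_lneg_le_iff (b x : P) : lneg b ≤ x ↔ rneg x ≤ b := by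
  constructor
  · intro h; have := rneg_anti _ _ h; rwa [rneg_lneg] at this
  · intro h; have := lneg_anti _ _ h; rwa [lneg_rneg] at this

lemma ps_res_circ (a b c : P) : circ a b ≤ c ↔ b ≤ ssquig a c := by
  rw [sa_circ, ssquig, ← ps_le_lneg_iff]

lemma ps_res_cstar (a b c : P) : cstar a b ≤ c ↔ b ≤ sarr a c := by
  rw [sa_cstar, sarr, ← ps_le_rneg_iff]

lemma ps_smeet_le_left (a b : P) : smeet a b ≤ a := by
  have h : circ a (ssquig a b) ≤ circ a ⊤ := by
    rw [ps_res_circ]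
    exact le_trans le_top ((ps_res_circ a ⊤ (circ a ⊤)).1 le_rfl)
  simpa [smeet, circ_one] using h

lemma ps_smeet_le_right (a b : P) : smeet a b ≤ b :=
  (ps_res_circ a _ b).2 le_rfl

lemma ps_le_smeet {a b c : P} (h1 : c ≤ a) (h2 : c ≤ b) : c ≤ smeet a b :=
  (divisibility a b c h1 h2).1

lemma ps_isGLB (a b : P) : IsGLB {a, b} (smeet a b) := by
  constructor
  · rintro x (rfl | rfl)
    · exact ps_smeet_le_left _ _
    · exact ps_smeet_le_right _ _
  · intro c hc
    exact ps_le_smeet (hc (by simp)) (hc (by simp))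

lemma ps_isLUB_l (a b : P) : IsLUB {a, b} (rneg (smeet (lneg a) (lneg b))) := by
  constructor
  · rintro x (rfl | rfl)
    · rw [← ps_le_lneg_iff]; exact ps_smeet_le_left _ _
    · rw [← ps_le_lneg_iff]; exact ps_smeet_le_right _ _
  · intro c hc
    rw [ps_rneg_le_iff]
    exact ps_le_smeet (lneg_anti _ _ (hc (by simp))) (lneg_anti _ _ (hc (by simp)))

lemma ps_isLUB_r (a b : P) : IsLUB {a, b} (lneg (smeet (rneg a) (rneg b))) := by
  constructor
  · rintro x (rfl | rfl)
    · rw [← ps_le_rneg_iff]; exact ps_smeet_le_left _ _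
    · rw [← ps_le_rneg_iff]; exact ps_smeet_le_right _ _
  · intro c hc
    rw [ps_lneg_le_iff]
    exact ps_le_smeet (rneg_anti _ _ (hc (by simp))) (rneg_anti _ _ (hc (by simp)))

end Aux

/-- Theorem 3.3: every pseudo Sasaki algebra is a double CI-lattice: unity and
residuation hold for (∘,⇝) and (∗,→), binary meets and joins exist, with
a∧b = a∘(a⇝b) = a∗(a→b) and a∨b = (a⁻∧b⁻)~ = (a~∧b~)⁻. -/
theorem pseudoSasaki_is_double_CI_lattice {P : Type*} [PseudoSasaki P] :
    (∀ a : P, circ ⊤ a = a ∧ circ a ⊤ = a ∧ cstar ⊤ a = a ∧ cstar a ⊤ = a) ∧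
    (∀ a b c : P, (circ a b ≤ c ↔ b ≤ ssquig a c) ∧ (cstar a b ≤ c ↔ b ≤ sarr a c)) ∧
    (∀ a b : P, smeet a b = cstar a (sarr a b) ∧ IsGLB {a, b} (smeet a b)) ∧
    (∀ a b : P, rneg (smeet (lneg a) (lneg b)) = lneg (smeet (rneg a) (rneg b)) ∧
      IsLUB {a, b} (rneg (smeet (lneg a) (lneg b)))) := by
  refine ⟨fun a => ⟨one_circ a, circ_one a, one_cstar a, cstar_one a⟩,
    fun a b c => ⟨ps_res_circ a b c, ps_res_cstar a b c⟩,
    fun a b => ⟨(divisibility a b ⊥ bot_le bot_le).2, ps_isGLB a b⟩,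
    fun a b => ⟨(ps_isLUB_l a b).unique (ps_isLUB_r a b), ps_isLUB_l a b⟩⟩
end

section
/- Let P be a pseudo Sasaki algebra and let a, b in P with a ≤ b. Then b = (a⁻∗(a⁻∘b)⁻)~ and b = (a~∘(a~∗b)~)⁻. -/
open PseudoSasaki

/-- Lemma 3.7: if a ≤ b then b = (a⁻∗(a⁻∘b)⁻)~ and b = (a~∘(a~∗b)~)⁻. -/
theorem pseudoSasaki_subtract {P : Type*} [PseudoSasaki P] (a b : P) (h : a ≤ b) :
    b = rneg (cstar (lneg a) (lneg (circ (lneg a) b))) ∧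
    b = lneg (circ (rneg a) (rneg (cstar (rneg a) b))) := by

  constructor
  · -- b = rneg (cstar (lneg a) (lneg (circ (lneg a) b)))
    apply le_antisymm
    · -- b ≤ rneg _, i.e. cstar (lneg a) (lneg (circ (lneg a) b)) ≤ lneg b
      have h1 : cstar (lneg a) (lneg (circ (lneg a) b)) ≤ lneg b := by
        rw [sa_cstar, rneg_lneg, rneg_lneg]
      have := rneg_anti _ _ h1
      rwa [rneg_lneg] at this
    · -- rneg _ ≤ b, i.e. lneg b ≤ cstar (lneg a) (lneg (circ (lneg a) b))
      have hd := divisibility (lneg a) (lneg b) (lneg b) (lneg_anti _ _ h) le_rfl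
      have h2 : lneg b ≤ cstar (lneg a) (lneg (circ (lneg a) b)) := by
        have := hd.1
        rw [hd.2, rneg_lneg] at this
        exact this
      have := rneg_anti _ _ h2
      rwa [rneg_lneg] at this
  · apply le_antisymm
    · have h1 : circ (rneg a) (rneg (cstar (rneg a) b)) ≤ rneg b := by
        rw [sa_circ, lneg_rneg, lneg_rneg]
      have := lneg_anti _ _ h1
      rwa [lneg_rneg] at this
    · have hd := divisibility (rneg a) (rneg b) (rneg b) (rneg_anti _ _ h) le_rfl
      have h2 : rneg b ≤ circ (rneg a) (rneg (cstar (rneg a) b)) := by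
        have := hd.1
        rwa [lneg_rneg] at this
      have := lneg_anti _ _ h2
      rwa [lneg_rneg] at this
end

section
/- Let (P; ⊕, 0, 1) be a lattice-ordered pseudo-effect algebra with Sasaki operations a∘b := (a∧b⁻)∕a and a∗b := a∖(a∧b~). If a⊕b exists (i.e., a ≤ b⁻), then a⊕b = (b⁻∗a⁻)~ = (a~∘b~)⁻. -/
/-- A pseudo-effect algebra: a set with a partial binary operation ⊕ (encoded by a
definedness predicate `defd` and a total function `padd`) and constants `zero`, `one`,
satisfying axioms (PE1)-(PE4). -/
class PseudoEffectAlgebra (P : Type*) where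
  defd : P → P → Prop
  padd : P → P → P
  zero : P
  one : P
  pe1_defined : ∀ a b c : P,
    (defd a b ∧ defd (padd a b) c) ↔ (defd b c ∧ defd a (padd b c))
  pe1_assoc : ∀ a b c : P, defd a b → defd (padd a b) c →
    padd (padd a b) c = padd a (padd b c)
  pe2_right : ∀ a : P, ∃! d : P, defd a d ∧ padd a d = one
  pe2_left : ∀ a : P, ∃! e : P, defd e a ∧ padd e a = one
  pe3 : ∀ a b : P, defd a b → ∃ d e : P, defd d a ∧ defd b e ∧
    padd a b = padd d a ∧ padd a b = padd b e
  pe4_right : ∀ a : P, defd a one → a = zero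
  pe4_left : ∀ a : P, defd one a → a = zero

namespace PseudoEffectAlgebra

variable {P : Type*} [PseudoEffectAlgebra P]

/-- The order induced by ⊕: a ≤ b iff c⊕a = b for some c. -/
def ple (a b : P) : Prop := ∃ c : P, defd c a ∧ padd c a = b

/-- The "left" subtraction: b∖a is the element x with x⊕a = b (defined iff a ≤ b). -/
noncomputable def rsub (b a : P) : P :=
  @Classical.epsilon P ⟨zero⟩ (fun x => defd x a ∧ padd x a = b)

/-- The "right" subtraction: a∕b is the element y with a⊕y = b (defined iff a ≤ b). -/
noncomputable def ldiv (a b : P) : P :=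
  @Classical.epsilon P ⟨zero⟩ (fun y => defd a y ∧ padd a y = b)

/-- The left complement a⁻ := 1∖a. -/
noncomputable def lcompl (a : P) : P := rsub one a

/-- The right complement a~ := a∕1. -/
noncomputable def rcompl (a : P) : P := ldiv a one

end PseudoEffectAlgebra

open PseudoEffectAlgebra

namespace PseudoEffectAlgebra

variable {P : Type*} [PseudoEffectAlgebra P]

lemma lcompl_spec (a : P) : defd (lcompl a) a ∧ padd (lcompl a) a = one := by
  obtain ⟨e, he, _⟩ := pe2_left a
  exact Classical.epsilon_spec (p := fun x : P => defd x a ∧ padd x a = one) ⟨e, he⟩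

lemma rcompl_spec (a : P) : defd a (rcompl a) ∧ padd a (rcompl a) = one := by
  obtain ⟨d, hd, _⟩ := pe2_right a
  exact Classical.epsilon_spec (p := fun y : P => defd a y ∧ padd a y = one) ⟨d, hd⟩

lemma rcompl_eq {a y : P} (h1 : defd a y) (h2 : padd a y = one) : rcompl a = y := by
  obtain ⟨d, _, hu⟩ := pe2_right a
  exact (hu _ (rcompl_spec a)).trans (hu _ ⟨h1, h2⟩).symm

lemma lcompl_eq {a x : P} (h1 : defd x a) (h2 : padd x a = one) : lcompl a = x := by
  obtain ⟨e, _, hu⟩ := pe2_left a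
  exact (hu _ (lcompl_spec a)).trans (hu _ ⟨h1, h2⟩).symm

lemma rcompl_lcompl (a : P) : rcompl (lcompl a) = a :=
  rcompl_eq (lcompl_spec a).1 (lcompl_spec a).2

lemma lcompl_rcompl (a : P) : lcompl (rcompl a) = a :=
  lcompl_eq (rcompl_spec a).1 (rcompl_spec a).2

end PseudoEffectAlgebra


/-- A lattice pseudo-effect algebra: a pseudo-effect algebra whose induced order is a
lattice. -/
class LatticePseudoEffectAlgebra (P : Type*) extends Lattice P, PseudoEffectAlgebra P where
  le_iff : ∀ a b : P, a ≤ b ↔ ∃ c : P, defd c a ∧ padd c a = b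

namespace LatticePseudoEffectAlgebra

variable {P : Type*} [LatticePseudoEffectAlgebra P]

/-- The "right" Sasaki product a∘b := (a∧b⁻)∕a. -/
noncomputable def scirc (a b : P) : P := ldiv (a ⊓ lcompl b) a

/-- The "left" Sasaki product a∗b := a∖(a∧b~). -/
noncomputable def scstar (a b : P) : P := rsub a (a ⊓ rcompl b)

end LatticePseudoEffectAlgebra

open LatticePseudoEffectAlgebra

/-- Theorem 4.2: if a⊕b exists, then a⊕b = (b⁻∗a⁻)~ = (a~∘b~)⁻. -/
theorem lpea_add_eq_sasaki {P : Type*} [LatticePseudoEffectAlgebra P] (a b : P)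
    (h : defd a b) :
    padd a b = rcompl (scstar (lcompl b) (lcompl a)) ∧
    padd a b = lcompl (scirc (rcompl a) (rcompl b)) := by
  set t := padd a b with ht
  -- complements of t
  have hlt := lcompl_spec t
  have hrt := rcompl_spec t
  have hla := lcompl_spec a
  have hlb := lcompl_spec b
  have hra := rcompl_spec a
  have hrb := rcompl_spec b
  constructor
  · -- part 1
    -- a ≤ lcompl b
    have h1 := (pe1_defined (lcompl t) a b).mpr ⟨h, by rw [← ht]; exact hlt.1⟩
    have hassoc1 : padd (padd (lcompl t) a) b = one := by
      rw [pe1_assoc _ _ _ h1.1 h1.2, ← ht, hlt.2]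
    have hlbeq : lcompl b = padd (lcompl t) a := lcompl_eq h1.2 hassoc1
    have hle : a ≤ lcompl b := (le_iff a (lcompl b)).mpr ⟨lcompl t, h1.1, hlbeq.symm⟩
    have hinf : lcompl b ⊓ rcompl (lcompl a) = a := by
      rw [rcompl_lcompl]; exact inf_eq_right.mpr hle
    have hex : ∃ x : P, defd x a ∧ padd x a = lcompl b := ⟨lcompl t, h1.1, hlbeq.symm⟩
    have hx := Classical.epsilon_spec (p := fun x : P => defd x a ∧ padd x a = lcompl b) hex
    rw [scstar, hinf]
    set x := rsub (lcompl b) a with hxdef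
    have hx' : defd x a ∧ padd x a = lcompl b := hx
    have h2 := (pe1_defined x a b).mp ⟨hx'.1, by rw [hx'.2]; exact hlb.1⟩
    have : padd x t = one := by
      rw [ht, ← pe1_assoc _ _ _ hx'.1 (by rw [hx'.2]; exact hlb.1), hx'.2, hlb.2]
    exact (rcompl_eq h2.2 this).symm
  · -- part 2
    -- b ≤ rcompl a
    have h1 := (pe1_defined a b (rcompl t)).mp ⟨h, by rw [← ht]; exact hrt.1⟩
    have hassoc1 : padd a (padd b (rcompl t)) = one := by
      rw [← pe1_assoc _ _ _ h (by rw [← ht]; exact hrt.1), ← ht, hrt.2]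
    have hraeq : rcompl a = padd b (rcompl t) := rcompl_eq h1.2 hassoc1
    obtain ⟨d, e, hd, he, hdeq, _⟩ := pe3 b (rcompl t) h1.1
    have hle : b ≤ rcompl a := (le_iff b (rcompl a)).mpr ⟨d, hd, by rw [← hdeq, ← hraeq]⟩
    have hinf : rcompl a ⊓ lcompl (rcompl b) = b := by
      rw [lcompl_rcompl]; exact inf_eq_right.mpr hle
    have hex : ∃ y : P, defd b y ∧ padd b y = rcompl a :=
      ⟨rcompl t, h1.1, hraeq.symm⟩
    have hy := Classical.epsilon_spec (p := fun y : P => defd b y ∧ padd b y = rcompl a) hex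
    rw [scirc, hinf]
    set y := ldiv b (rcompl a) with hydef
    have hy' : defd b y ∧ padd b y = rcompl a := hy
    have h2 := (pe1_defined a b y).mpr ⟨hy'.1, by rw [hy'.2]; exact hra.1⟩
    have : padd t y = one := by
      rw [ht, pe1_assoc _ _ _ h (by rw [← ht]; exact h2.2), hy'.2, hra.2]
    exact (lcompl_eq h2.2 this).symm
end
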